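/- arXiv:1205.4003 — 3 statements merged into one kernel-verified Lean document; each statement's English description precedes it below -/
import Mathlib

section
/- Fix q, t with 0 ≤ |q| < t, n ∈ ℕ, and a pair partition V = {(w_1,z_1),…,(w_n,z_n)} ∈ 𝒫₂(2n), with ε(1), …, ε(2n) ∈ {1,*} such that (ε(w_i), ε(z_i)) = (1,*) for every block. Let {μ(i,j)}_{1≤i<j} be i.i.d. non-vanishing real random variables with E[μ(i,j)] = q/t and E[μ(i,j)²] = 1, with coefficients populated by the standard prescription. For a tuple ι = (ι(1),…,ι(2n)) ~ V, let β(ι) := Π_{(w_j,w_k,z_j,z_k) ∈ Cross(V)} μ_{ε(z_j),ε(w_k)}(ι(z_j),ι(w_k)) · Π_{(w_ℓ,w_m,z_m,z_ℓ) ∈ Nest(V)} μ_{ε(z_ℓ),ε(z_m)}(ι(z_ℓ),ι(z_m)) μ_{ε(z_ℓ),ε(w_m)}(ι(z_ℓ),ι(w_m)). If two tuples i ~ V and j ~ V are such that their sets of values intersect in at most one element, then E[β(i)·β(j)] = q^{2·cross(V)} t^{2·nest(V)} = E[β(i)]·E[β(j)]. -/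
open Filter MeasureTheory ProbabilityTheory
open scoped BigOperators ComplexOrder Classical

noncomputable section

/-- `sel a e` is `a^ε`: `a` if `e = false` (i.e. ε = 1) and `star a` if `e = true` (i.e. ε = ∗). -/
def sel {A : Type*} [Star A] (a : A) (e : Bool) : A := if e then star a else a

/-- The product `b_{i(1)}^{ε(1)} ⋯ b_{i(r)}^{ε(r)}`, indexed by a list of (index, exponent) pairs. -/
def listProd {A : Type*} [Monoid A] [Star A] (b : ℕ → A) (l : List (ℕ × Bool)) : A :=
  (l.map fun p => sel (b p.1) p.2).prod

/-- The product `b_{i(1)}^{ε(1)} ⋯ b_{i(r)}^{ε(r)}`, indexed by `Fin r`. -/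
def tupProd {A : Type*} [Monoid A] [Star A] (b : ℕ → A) {r : ℕ}
    (i : Fin r → ℕ) (eps : Fin r → Bool) : A :=
  (List.ofFn fun k => sel (b (i k)) (eps k)).prod

/-- The mixed moment `φ(X^{ε(1)} ⋯ X^{ε(r)})` of a single element `X`. -/
def smom {A : Type*} [Ring A] [StarRing A] [Algebra ℂ A] (φ : A →ₗ[ℂ] ℂ)
    (X : A) {r : ℕ} (eps : Fin r → Bool) : ℂ :=
  φ ((List.ofFn fun k => sel X (eps k)).prod)

/-- The commutation coefficients are nonzero reals. -/
def NonzeroCoeff (c : Bool → Bool → ℕ → ℕ → ℝ) : Prop :=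
  ∀ i j : ℕ, i ≠ j → ∀ e e' : Bool, c e e' i j ≠ 0

/-- Relations (A)–(B) on the commutation coefficients (`false` = 1, `true` = ∗):
`μ_{ε,ε'}(i,j) = 1/μ_{ε',ε}(j,i)`, `μ_{1,1}(i,j) = 1/μ_{∗,∗}(i,j)`,
`μ_{1,∗}(i,j) = 1/μ_{∗,1}(i,j)`. -/
def RelAB (c : Bool → Bool → ℕ → ℕ → ℝ) : Prop :=
  (∀ i j : ℕ, i ≠ j → ∀ e e' : Bool, c e e' i j = (c e' e j i)⁻¹) ∧
  (∀ i j : ℕ, i ≠ j → c false false i j = (c true true i j)⁻¹) ∧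
  (∀ i j : ℕ, i ≠ j → c false true i j = (c true false i j)⁻¹)

/-- Condition (★) for a sequence `b` in a complex ∗-probability space, with
commutation coefficients `c e e' i j = μ_{ε,ε'}(i,j)` (`false` = 1, `true` = ∗).
The factoring over naturally ordered products is stated in block form: a naturally
ordered product is a concatenation of nonempty blocks with constant indices, the
(distinct) block indices being strictly increasing. -/
structure StarCond {A : Type*} [Ring A] [StarRing A] [Algebra ℂ A]
    (φ : A →ₗ[ℂ] ℂ) (b : ℕ → A) (c : Bool → Bool → ℕ → ℕ → ℝ) : Prop where
  zero_mean : ∀ i, φ (b i) = 0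
  zero_mean_star : ∀ i, φ (star (b i)) = 0
  zero_bb : ∀ i, φ (b i * b i) = 0
  zero_ss : ∀ i, φ (star (b i) * star (b i)) = 0
  zero_sb : ∀ i, φ (star (b i) * b i) = 0
  covar : ∀ i j : ℕ, ∀ e e' : Bool,
    φ (sel (b i) e * sel (b i) e') = φ (sel (b j) e * sel (b j) e')
  bounded : ∀ r : ℕ, ∃ α : ℝ, 0 ≤ α ∧ ∀ l : List (ℕ × Bool), l.length = r →
    ‖φ (listProd b l)‖ ≤ α
  factors : ∀ L : List (ℕ × List Bool),
    List.Chain' (· < ·) (L.map Prod.fst) → (∀ p ∈ L, p.2 ≠ []) →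
    φ ((L.map fun p => (p.2.map (sel (b p.1))).prod).prod)
      = (L.map fun p => φ ((p.2.map (sel (b p.1))).prod)).prod
  commRel : ∀ i j : ℕ, i ≠ j → ∀ e e' : Bool,
    sel (b i) e * sel (b j) e' = ((c e' e j i : ℝ) : ℂ) • (sel (b j) e' * sel (b i) e)

/-- The normalized partial sum `S_N = (b 1 + ⋯ + b N)/√N`. -/
def pSum {A : Type*} [Ring A] [Algebra ℂ A] (b : ℕ → A) (N : ℕ) : A :=
  (((Real.sqrt N)⁻¹ : ℝ) : ℂ) • ∑ i ∈ Finset.Icc 1 N, b i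

/-- A pair partition `V = {(w 1, z 1), …, (w n, z n)}` of `{1, …, 2n}` (here of `Fin (2n)`),
with `w i < z i`, `w` strictly increasing, and the `w i, z i` exhausting `Fin (2n)`. -/
structure PairPartition (n : ℕ) where
  w : Fin n → Fin (2 * n)
  z : Fin n → Fin (2 * n)
  wz : ∀ i, w i < z i
  mono : StrictMono w
  bij : Function.Bijective fun p : Fin n × Bool => if p.2 then z p.1 else w p.1

instance (n : ℕ) : Fintype (PairPartition n) :=
  Fintype.ofInjective (fun V : PairPartition n => (V.w, V.z)) (by
    rintro ⟨w₁, z₁, h₁, h₂, h₃⟩ ⟨w₂, z₂, g₁, g₂, g₃⟩ h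
    simp only [Prod.mk.injEq] at h
    obtain ⟨rfl, rfl⟩ := h
    rfl)

/-- The crossings of a pair partition: pairs of blocks `(j, k)` with `w j < w k < z j < z k`. -/
def crossSet {n : ℕ} (V : PairPartition n) : Finset (Fin n × Fin n) :=
  Finset.univ.filter fun p => V.w p.1 < V.w p.2 ∧ V.w p.2 < V.z p.1 ∧ V.z p.1 < V.z p.2

/-- The nestings of a pair partition: pairs of blocks `(j, m)` with `w j < w m < z m < z j`. -/
def nestSet {n : ℕ} (V : PairPartition n) : Finset (Fin n × Fin n) :=
  Finset.univ.filter fun p => V.w p.1 < V.w p.2 ∧ V.w p.2 < V.z p.2 ∧ V.z p.2 < V.z p.1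

/-- `cross(V)`, the number of crossings. -/
def crossNum {n : ℕ} (V : PairPartition n) : ℕ := (crossSet V).card

/-- `nest(V)`, the number of nestings. -/
def nestNum {n : ℕ} (V : PairPartition n) : ℕ := (nestSet V).card

/-- Two positions lie in the same block of the pair partition `V`. -/
def sameBlock {n : ℕ} (V : PairPartition n) (k₁ k₂ : Fin (2 * n)) : Prop :=
  k₁ = k₂ ∨ ∃ m, (k₁ = V.w m ∧ k₂ = V.z m) ∨ (k₁ = V.z m ∧ k₂ = V.w m)

/-- `(i(1), …, i(2n)) ∼ V`: entries agree exactly on the blocks of `V`. -/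
def tupleEquiv {n : ℕ} {α : Type*} (V : PairPartition n) (i : Fin (2 * n) → α) : Prop :=
  ∀ k₁ k₂, i k₁ = i k₂ ↔ sameBlock V k₁ k₂

/-- The tuples in `[N]^{2n} = {1, …, N}^{2n}` that are equivalent to `V`. -/
def tuples (n N : ℕ) (V : PairPartition n) : Finset (Fin (2 * n) → ℕ) :=
  (Fintype.piFinset fun _ : Fin (2 * n) => Finset.Icc 1 N).filter fun i => tupleEquiv V i

/-- `β^{ε(1),…,ε(2n)}_{i(1),…,i(2n)}`: the product over crossings of `V` of
`μ_{ε(z_j),ε(w_k)}(i(z_j),i(w_k))` times the product over nestings of `V` of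
`μ_{ε(z_j),ε(z_m)}(i(z_j),i(z_m)) · μ_{ε(z_j),ε(w_m)}(i(z_j),i(w_m))`. -/
def betaProd (n : ℕ) (V : PairPartition n) (eps : Fin (2 * n) → Bool)
    (c : Bool → Bool → ℕ → ℕ → ℝ) (i : Fin (2 * n) → ℕ) : ℝ :=
  (∏ p ∈ crossSet V, c (eps (V.z p.1)) (eps (V.w p.2)) (i (V.z p.1)) (i (V.w p.2))) *
  ∏ p ∈ nestSet V,
    c (eps (V.z p.1)) (eps (V.z p.2)) (i (V.z p.1)) (i (V.z p.2)) *
      c (eps (V.z p.1)) (eps (V.w p.2)) (i (V.z p.1)) (i (V.w p.2))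

/-- `X_N = N^{-n} Σ_{(i(1),…,i(2n)) ∼ V} β^{ε(1),…,ε(2n)}_{i(1),…,i(2n)}`, whose limit
(when it exists) is `λ_{V,ε(1),…,ε(2n)}`. -/
def lambdaSum (n : ℕ) (V : PairPartition n) (eps : Fin (2 * n) → Bool)
    (c : Bool → Bool → ℕ → ℕ → ℝ) (N : ℕ) : ℝ :=
  ((N : ℝ)⁻¹) ^ n * ∑ i ∈ tuples n N V, betaProd n V eps c i

/-- One-pair standard prescription: for `x = μ(i,j)` (with `i < j`),
`μ_{∗,∗} = x`, `μ_{∗,1} = t·x`, `μ_{1,1} = x⁻¹`, `μ_{1,∗} = (t·x)⁻¹`. -/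
def prescOne (t x : ℝ) (e e' : Bool) : ℝ :=
  if e then (if e' then x else t * x) else (if e' then (t * x)⁻¹ else x⁻¹)

/-- The standard prescription of commutation coefficients from `{μ(i,j)}_{i<j}`,
extended to `i > j` by `μ_{ε',ε}(j,i) = 1/μ_{ε,ε'}(i,j)`. -/
def presc (t : ℝ) (m : ℕ → ℕ → ℝ) (e e' : Bool) (i j : ℕ) : ℝ :=
  if i < j then prescOne t (m i j) e e' else (prescOne t (m j i) e' e)⁻¹

/-- The index set `{(i,j) : 1 ≤ i < j}` of the random commutation coefficients. -/
def PairIdx : Type := {p : ℕ × ℕ // 1 ≤ p.1 ∧ p.1 < p.2}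

/-- `σ_x = [[1,0],[0,√t·x]]`. -/
def sigmaM (t x : ℝ) : Matrix (Fin 2) (Fin 2) ℝ := !![1, 0; 0, Real.sqrt t * x]

/-- `γ = [[0,1],[0,0]]`. -/
def gammaM : Matrix (Fin 2) (Fin 2) ℝ := !![0, 1; 0, 0]

/-- The two-parameter Jordan–Wigner matrix
`b_{n,i} = σ_{μ(1,i)} ⊗ ⋯ ⊗ σ_{μ(i-1,i)} ⊗ γ ⊗ σ₁^{⊗(n-i)} ∈ M₂(ℝ)^{⊗n}`,
realized on the index set `Fin n → Fin 2` (tensor/Kronecker products of matrices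
have entries the products of the entries of the factors). -/
def jw (t : ℝ) (m : ℕ → ℕ → ℝ) (n i : ℕ) : Matrix (Fin n → Fin 2) (Fin n → Fin 2) ℝ :=
  Matrix.of fun x y => ∏ k : Fin n,
    (if (k : ℕ) + 1 < i then sigmaM t (m ((k : ℕ) + 1) i)
     else if (k : ℕ) + 1 = i then gammaM
     else sigmaM t 1) (x k) (y k)

/-- `φ_n(a) = ⟨a e₀, e₀⟩ = a₀₀`. -/
def phiM (n : ℕ) (a : Matrix (Fin n → Fin 2) (Fin n → Fin 2) ℝ) : ℝ :=
  a (fun _ => 0) (fun _ => 0)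

/-- The normalized partial sum `S_N = (b_{N,1} + ⋯ + b_{N,N})/√N` of Jordan–Wigner matrices. -/
def jwS (t : ℝ) (m : ℕ → ℕ → ℝ) (N : ℕ) : Matrix (Fin N → Fin 2) (Fin N → Fin 2) ℝ :=
  (Real.sqrt N)⁻¹ • ∑ i ∈ Finset.Icc 1 N, jw t m N i

/-! For a tuple `u ∼ V` whose blocks carry the exponents `(1, ∗)`, each crossing or nesting
`p` of `V` contributes to `β(u)` a factor depending on the single coefficient `μ(a, b)`, where
`{a, b}` are the values of `u` on the two blocks of `p`; distinct `p` give distinct pairs.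
A crossing contributes `t μ`, of mean `q`; a nesting contributes `t μ²` or `μ⁻¹ · t μ = t`, of
mean `t`. Independence gives `E[β(u)] = q^cross(V) t^nest(V)`. When the value sets of `i` and `j`
share at most one element, no pair `{a, b}` serves both tuples, so `β(i) β(j)` is again a product
of functions of distinct independent coefficients, with expectation `(q^cross(V) t^nest(V))²`. -/

theorem integral_finset_prod_comp_of_injOn {Ω ι κ : Type*} [MeasurableSpace Ω] {μ : Measure Ω}
    {X : κ → Ω → ℝ} (hX : iIndepFun X μ) (hXm : ∀ k, Measurable (X k))
    {f : ι → ℝ → ℝ} (hf : ∀ a, Measurable (f a)) {s : Finset ι} {g : ι → κ}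
    (hg : Set.InjOn g s) :
    ∫ ω, ∏ a ∈ s, f a (X (g a) ω) ∂μ = ∏ a ∈ s, ∫ ω, f a (X (g a) ω) ∂μ := by
  have hXs : iIndepFun (fun a : s => X (g a)) μ := hX.precomp hg.injective
  simpa only [Finset.univ_eq_attach, Finset.prod_attach s fun a => ∫ ω, f a (X (g a) ω) ∂μ,
    fun ω => Finset.prod_attach s fun a => f a (X (g a) ω)] using
    hXs.integral_fun_prod_comp (f := fun a : s => f a)
      (fun a => (hXm _).aemeasurable) (fun a => (hf a).aestronglyMeasurable)

namespace PairPartition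

variable {n : ℕ} (V : PairPartition n)

theorem w_ne_z (a b : Fin n) : V.w a ≠ V.z b := fun h => by
  simpa using V.bij.injective (a₁ := (a, false)) (a₂ := (b, true)) (by simpa using h)

theorem sameBlock_w_w_iff {a b : Fin n} : sameBlock V (V.w a) (V.w b) ↔ a = b := by
  refine ⟨?_, fun h => Or.inl (congrArg V.w h)⟩
  rintro (h | ⟨m, ⟨-, h⟩ | ⟨h, -⟩⟩)
  · exact V.mono.injective h
  · exact absurd h (V.w_ne_z b m)
  · exact absurd h (V.w_ne_z a m)

theorem disjoint_crossSet_nestSet : Disjoint (crossSet V) (nestSet V) := by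
  simp only [Finset.disjoint_left, crossSet, nestSet, Finset.mem_filter, Finset.mem_univ,
    true_and]
  exact fun _ hc hn => lt_asymm hc.2.2 hn.2.2

theorem w_lt_w_of_mem {p : Fin n × Fin n} (hp : p ∈ crossSet V ∪ nestSet V) :
    V.w p.1 < V.w p.2 := by
  simp only [crossSet, nestSet, Finset.mem_union, Finset.mem_filter, Finset.mem_univ,
    true_and] at hp
  rcases hp with h | h <;> exact h.1

theorem prod_crossSet_union_nestSet_ite {M : Type*} [CommMonoid M] (x y : M) :
    ∏ p ∈ crossSet V ∪ nestSet V, (if p ∈ crossSet V then x else y)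
      = x ^ crossNum V * y ^ nestNum V := by
  rw [Finset.prod_union V.disjoint_crossSet_nestSet,
    Finset.prod_congr rfl fun p hp => if_pos hp,
    Finset.prod_congr rfl fun p hp =>
      if_neg (V.disjoint_crossSet_nestSet.notMem_of_mem_right_finset hp),
    Finset.prod_const, Finset.prod_const, crossNum, nestNum]

end PairPartition

namespace tupleEquiv

variable {n : ℕ} {V : PairPartition n} {α : Type*} {u : Fin (2 * n) → α}

theorem apply_z (hu : tupleEquiv V u) (k : Fin n) : u (V.z k) = u (V.w k) :=
  (hu _ _).mpr (Or.inr ⟨k, Or.inr ⟨rfl, rfl⟩⟩)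

theorem apply_w_eq_apply_w_iff (hu : tupleEquiv V u) {a b : Fin n} :
    u (V.w a) = u (V.w b) ↔ a = b :=
  (hu _ _).trans V.sameBlock_w_w_iff

theorem apply_w_ne_apply_w (hu : tupleEquiv V u) {p : Fin n × Fin n}
    (hp : p ∈ crossSet V ∪ nestSet V) : u (V.w p.1) ≠ u (V.w p.2) := fun h =>
  (V.w_lt_w_of_mem hp).ne (congrArg V.w (hu.apply_w_eq_apply_w_iff.mp h))

end tupleEquiv

/-- The index of `μ(min a b, max a b)`; a junk value when `a = b` or `min a b = 0`. -/
def pairIdx (a b : ℕ) : PairIdx :=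
  if h : 1 ≤ min a b ∧ min a b < max a b then ⟨(min a b, max a b), h⟩
  else ⟨(1, 2), by norm_num⟩

theorem pairIdx_val {a b : ℕ} (ha : 1 ≤ a) (hb : 1 ≤ b) (hab : a ≠ b) :
    (pairIdx a b).1 = (min a b, max a b) := by
  unfold pairIdx
  exact congrArg Subtype.val (dif_pos ⟨by omega, by omega⟩)

theorem pairIdx_eq_pairIdx_iff {a b c d : ℕ} (ha : 1 ≤ a) (hb : 1 ≤ b) (hc : 1 ≤ c)
    (hd : 1 ≤ d) (hab : a ≠ b) (hcd : c ≠ d) :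
    pairIdx a b = pairIdx c d ↔ (a = c ∧ b = d) ∨ (a = d ∧ b = c) := by
  refine Subtype.val_injective.eq_iff.symm.trans ?_
  rw [pairIdx_val ha hb hab, pairIdx_val hc hd hcd, Prod.mk.injEq]
  omega

def coeffIdx {n : ℕ} (V : PairPartition n) (u : Fin (2 * n) → ℕ) (p : Fin n × Fin n) :
    PairIdx :=
  pairIdx (u (V.w p.1)) (u (V.w p.2))

section CoeffIdx

variable {n : ℕ} {V : PairPartition n}

theorem tupleEquiv.injOn_coeffIdx {u : Fin (2 * n) → ℕ} (hu : tupleEquiv V u)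
    (hu1 : ∀ k, 1 ≤ u k) : Set.InjOn (coeffIdx V u) ↑(crossSet V ∪ nestSet V) := by
  intro p hp p' hp' h
  rcases (pairIdx_eq_pairIdx_iff (hu1 _) (hu1 _) (hu1 _) (hu1 _) (hu.apply_w_ne_apply_w hp)
    (hu.apply_w_ne_apply_w hp')).mp h with ⟨h1, h2⟩ | ⟨h1, h2⟩
  · exact Prod.ext (hu.apply_w_eq_apply_w_iff.mp h1) (hu.apply_w_eq_apply_w_iff.mp h2)
  · have hlt := V.w_lt_w_of_mem hp
    rw [hu.apply_w_eq_apply_w_iff.mp h1, hu.apply_w_eq_apply_w_iff.mp h2] at hlt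
    exact absurd (V.w_lt_w_of_mem hp') (lt_asymm hlt)

theorem coeffIdx_ne_coeffIdx_of_card_inter_le_one {i j : Fin (2 * n) → ℕ}
    (hiV : tupleEquiv V i) (hjV : tupleEquiv V j) (hi1 : ∀ k, 1 ≤ i k) (hj1 : ∀ k, 1 ≤ j k)
    (hint : (Finset.univ.image i ∩ Finset.univ.image j).card ≤ 1)
    {p p' : Fin n × Fin n} (hp : p ∈ crossSet V ∪ nestSet V)
    (hp' : p' ∈ crossSet V ∪ nestSet V) : coeffIdx V i p ≠ coeffIdx V j p' := by
  intro h
  have hmem : i (V.w p.1) ∈ Finset.univ.image j ∧ i (V.w p.2) ∈ Finset.univ.image j := by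
    rcases (pairIdx_eq_pairIdx_iff (hi1 _) (hi1 _) (hj1 _) (hj1 _)
      (hiV.apply_w_ne_apply_w hp) (hjV.apply_w_ne_apply_w hp')).mp h
      with ⟨h1, h2⟩ | ⟨h1, h2⟩ <;>
    simp [h1, h2]
  exact hint.not_gt (Finset.one_lt_card.mpr
    ⟨_, Finset.mem_inter.mpr ⟨by simp, hmem.1⟩, _, Finset.mem_inter.mpr ⟨by simp, hmem.2⟩,
      hiV.apply_w_ne_apply_w hp⟩)

theorem injOn_coeffIdx_of_card_inter_le_one {i j : Fin (2 * n) → ℕ}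
    (hiV : tupleEquiv V i) (hjV : tupleEquiv V j) (hi1 : ∀ k, 1 ≤ i k) (hj1 : ∀ k, 1 ≤ j k)
    (hint : (Finset.univ.image i ∩ Finset.univ.image j).card ≤ 1) :
    Set.InjOn (fun s : Fin 2 × (Fin n × Fin n) => coeffIdx V (![i, j] s.1) s.2)
      ↑(Finset.univ ×ˢ (crossSet V ∪ nestSet V) : Finset (Fin 2 × (Fin n × Fin n))) := by
  rintro ⟨a, p⟩ hp ⟨b, p'⟩ hp' h
  simp only [Finset.coe_product, Finset.coe_univ, Set.mem_prod, Set.mem_univ, true_and,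
    Finset.mem_coe] at hp hp' h
  fin_cases a <;> fin_cases b <;> simp only [Fin.zero_eta, Fin.mk_one, Matrix.cons_val_zero,
    Matrix.cons_val_one, Prod.mk.injEq, true_and] at h ⊢
  · exact hiV.injOn_coeffIdx hi1 hp hp' h
  · exact (coeffIdx_ne_coeffIdx_of_card_inter_le_one hiV hjV hi1 hj1 hint hp hp' h).elim
  · exact (coeffIdx_ne_coeffIdx_of_card_inter_le_one hiV hjV hi1 hj1 hint hp' hp h.symm).elim
  · exact hjV.injOn_coeffIdx hj1 hp hp' h

end CoeffIdx

section Prescription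

variable (t : ℝ) (m : ℕ → ℕ → ℝ) {a b : ℕ}

theorem presc_true_false_of_ne (hab : a ≠ b) :
    presc t m true false a b = t * m (min a b) (max a b) := by
  rcases hab.lt_or_gt with h | h
  · simp [presc, prescOne, h, h.le]
  · simp [presc, prescOne, h.not_gt, h.le]

theorem presc_true_true_of_lt (h : a < b) : presc t m true true a b = m a b := by
  simp [presc, prescOne, h]

theorem presc_true_true_of_gt (h : b < a) : presc t m true true a b = (m b a)⁻¹ := by
  simp [presc, prescOne, h.not_gt]

end Prescription

def blockFactor (t : ℝ) {n : ℕ} (V : PairPartition n) (u : Fin (2 * n) → ℕ)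
    (p : Fin n × Fin n) : ℝ → ℝ :=
  if p ∈ crossSet V then fun x => t * x
  else if u (V.w p.1) < u (V.w p.2) then fun x => x * (t * x)
  else fun x => x⁻¹ * (t * x)

theorem measurable_blockFactor (t : ℝ) {n : ℕ} (V : PairPartition n) (u : Fin (2 * n) → ℕ)
    (p : Fin n × Fin n) : Measurable (blockFactor t V u p) := by
  unfold blockFactor
  split_ifs <;> fun_prop

theorem tupleEquiv.betaProd_presc_eq_prod_blockFactor {t : ℝ} {m : ℕ → ℕ → ℝ} {n : ℕ}
    {V : PairPartition n} {eps : Fin (2 * n) → Bool}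
    (heps : ∀ k : Fin n, eps (V.w k) = false ∧ eps (V.z k) = true)
    {u : Fin (2 * n) → ℕ} (hu : tupleEquiv V u) (hu1 : ∀ k, 1 ≤ u k) :
    betaProd n V eps (presc t m) u = ∏ p ∈ crossSet V ∪ nestSet V,
      blockFactor t V u p (m (coeffIdx V u p).1.1 (coeffIdx V u p).1.2) := by
  rw [Finset.prod_union V.disjoint_crossSet_nestSet, betaProd]
  congr 1 <;> refine Finset.prod_congr rfl fun p hp => ?_
  · have hne := hu.apply_w_ne_apply_w (Finset.mem_union_left _ hp)
    simp only [(heps _).1, (heps _).2, hu.apply_z, coeffIdx, blockFactor, if_pos hp,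
      pairIdx_val (hu1 _) (hu1 _) hne, presc_true_false_of_ne t m hne]
  · have hne := hu.apply_w_ne_apply_w (Finset.mem_union_right _ hp)
    simp only [(heps _).1, (heps _).2, hu.apply_z, coeffIdx, blockFactor,
      if_neg (V.disjoint_crossSet_nestSet.notMem_of_mem_right_finset hp),
      pairIdx_val (hu1 _) (hu1 _) hne, presc_true_false_of_ne t m hne]
    rcases hne.lt_or_gt with h | h
    · simp [h, h.le, presc_true_true_of_lt t m h]
    · simp [h.not_gt, h.le, presc_true_true_of_gt t m h]

section Expectation

variable {Ω : Type*} [MeasureSpace Ω] [IsProbabilityMeasure (ℙ : Measure Ω)] {q t : ℝ}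

theorem integral_blockFactor (ht : t ≠ 0) {Y : Ω → ℝ} (hY0 : ∀ᵐ ω ∂ℙ, Y ω ≠ 0)
    (hY1 : ∫ ω, Y ω ∂ℙ = q / t) (hY2 : ∫ ω, Y ω ^ 2 ∂ℙ = 1) {n : ℕ} (V : PairPartition n)
    (u : Fin (2 * n) → ℕ) (p : Fin n × Fin n) :
    ∫ ω, blockFactor t V u p (Y ω) ∂ℙ = if p ∈ crossSet V then q else t := by
  unfold blockFactor
  split_ifs
  · rw [integral_const_mul, hY1, mul_div_cancel₀ q ht]
  · simp_rw [← mul_assoc, mul_comm _ t, mul_assoc, ← sq]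
    rw [integral_const_mul, hY2, mul_one]
  · have hae : (fun ω => (Y ω)⁻¹ * (t * Y ω)) =ᵐ[ℙ] fun _ => t :=
      hY0.mono fun ω hω => by field_simp
    simp [integral_congr_ae hae]

theorem integral_prod_blockFactor (ht : t ≠ 0) {X : PairIdx → Ω → ℝ}
    (hXm : ∀ k, Measurable (X k)) (hX : iIndepFun X ℙ) (hX0 : ∀ k, ∀ᵐ ω ∂ℙ, X k ω ≠ 0)
    (hX1 : ∀ k, ∫ ω, X k ω ∂ℙ = q / t) (hX2 : ∀ k, ∫ ω, X k ω ^ 2 ∂ℙ = 1)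
    {n : ℕ} (V : PairPartition n) {ι : Type*} {s : Finset ι} {u : ι → Fin (2 * n) → ℕ}
    {p : ι → Fin n × Fin n} (hinj : Set.InjOn (fun a => coeffIdx V (u a) (p a)) s) :
    ∫ ω, ∏ a ∈ s, blockFactor t V (u a) (p a) (X (coeffIdx V (u a) (p a)) ω) ∂ℙ
      = ∏ a ∈ s, if p a ∈ crossSet V then q else t := by
  rw [integral_finset_prod_comp_of_injOn hX hXm
    (fun a => measurable_blockFactor t V (u a) (p a)) hinj]
  exact Finset.prod_congr rfl fun a _ =>
    integral_blockFactor ht (hX0 _) (hX1 _) (hX2 _) V (u a) (p a)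

theorem integral_betaProd_presc (ht : t ≠ 0) (μr : ℕ → ℕ → Ω → ℝ)
    (hmeas : ∀ k : PairIdx, Measurable fun ω => μr k.1.1 k.1.2 ω)
    (hindep : iIndepFun (fun k : PairIdx => fun ω => μr k.1.1 k.1.2 ω) ℙ)
    (hnz : ∀ k : PairIdx, ∀ᵐ ω ∂ℙ, μr k.1.1 k.1.2 ω ≠ 0)
    (hmean : ∀ k : PairIdx, ∫ ω, μr k.1.1 k.1.2 ω ∂ℙ = q / t)
    (hsq : ∀ k : PairIdx, ∫ ω, (μr k.1.1 k.1.2 ω) ^ 2 ∂ℙ = 1)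
    {n : ℕ} {V : PairPartition n} {eps : Fin (2 * n) → Bool}
    (heps : ∀ k : Fin n, eps (V.w k) = false ∧ eps (V.z k) = true)
    {u : Fin (2 * n) → ℕ} (hu : tupleEquiv V u) (hu1 : ∀ k, 1 ≤ u k) :
    ∫ ω, betaProd n V eps (presc t fun a b => μr a b ω) u ∂ℙ
      = q ^ crossNum V * t ^ nestNum V := by
  simp_rw [hu.betaProd_presc_eq_prod_blockFactor heps hu1]
  exact (integral_prod_blockFactor ht hmeas hindep hnz hmean hsq V (u := fun _ => u) (p := id)
    (hu.injOn_coeffIdx hu1)).trans (V.prod_crossSet_union_nestSet_ite q t)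

theorem integral_betaProd_presc_mul_betaProd_presc (ht : t ≠ 0) (μr : ℕ → ℕ → Ω → ℝ)
    (hmeas : ∀ k : PairIdx, Measurable fun ω => μr k.1.1 k.1.2 ω)
    (hindep : iIndepFun (fun k : PairIdx => fun ω => μr k.1.1 k.1.2 ω) ℙ)
    (hnz : ∀ k : PairIdx, ∀ᵐ ω ∂ℙ, μr k.1.1 k.1.2 ω ≠ 0)
    (hmean : ∀ k : PairIdx, ∫ ω, μr k.1.1 k.1.2 ω ∂ℙ = q / t)
    (hsq : ∀ k : PairIdx, ∫ ω, (μr k.1.1 k.1.2 ω) ^ 2 ∂ℙ = 1)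
    {n : ℕ} {V : PairPartition n} {eps : Fin (2 * n) → Bool}
    (heps : ∀ k : Fin n, eps (V.w k) = false ∧ eps (V.z k) = true)
    {i j : Fin (2 * n) → ℕ} (hiV : tupleEquiv V i) (hjV : tupleEquiv V j)
    (hi1 : ∀ k, 1 ≤ i k) (hj1 : ∀ k, 1 ≤ j k)
    (hint : (Finset.univ.image i ∩ Finset.univ.image j).card ≤ 1) :
    ∫ ω, betaProd n V eps (presc t fun a b => μr a b ω) i *
        betaProd n V eps (presc t fun a b => μr a b ω) j ∂ℙ
      = (q ^ crossNum V * t ^ nestNum V) ^ 2 := by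
  have hsplit : ∀ ω, betaProd n V eps (presc t fun a b => μr a b ω) i *
      betaProd n V eps (presc t fun a b => μr a b ω) j
      = ∏ s ∈ Finset.univ ×ˢ (crossSet V ∪ nestSet V), blockFactor t V (![i, j] s.1) s.2
          (μr (coeffIdx V (![i, j] s.1) s.2).1.1 (coeffIdx V (![i, j] s.1) s.2).1.2 ω) := by
    intro ω
    rw [Finset.prod_product, Fin.prod_univ_two, hiV.betaProd_presc_eq_prod_blockFactor heps hi1,
      hjV.betaProd_presc_eq_prod_blockFactor heps hj1]
    rfl
  simp_rw [hsplit]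
  rw [integral_prod_blockFactor ht hmeas hindep hnz hmean hsq V
    (injOn_coeffIdx_of_card_inter_le_one hiV hjV hi1 hj1 hint), Finset.prod_product,
    Fin.prod_univ_two, V.prod_crossSet_union_nestSet_ite, sq]

end Expectation

theorem expectation_factorizes_disjoint_tuples_general
    (q t : ℝ) (hqt : |q| < t)
{Ω : Type*} [MeasureSpace Ω] [IsProbabilityMeasure (ℙ : Measure Ω)]
    (μr : ℕ → ℕ → Ω → ℝ)
    (hmeas : ∀ p : PairIdx, Measurable fun ω => μr p.1.1 p.1.2 ω)
    (hindep : iIndepFun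
      (fun p : PairIdx => fun ω => μr p.1.1 p.1.2 ω) ℙ)
    (hnz : ∀ p : PairIdx, ∀ᵐ ω ∂ℙ, μr p.1.1 p.1.2 ω ≠ 0)
    (hmean : ∀ p : PairIdx, ∫ ω, μr p.1.1 p.1.2 ω ∂ℙ = q / t)
    (hsq : ∀ p : PairIdx, ∫ ω, (μr p.1.1 p.1.2 ω) ^ 2 ∂ℙ = 1)
    (n : ℕ) (V : PairPartition n) (eps : Fin (2 * n) → Bool)
    (heps : ∀ m : Fin n, eps (V.w m) = false ∧ eps (V.z m) = true)
    (i j : Fin (2 * n) → ℕ) (hi1 : ∀ k, 1 ≤ i k) (hj1 : ∀ k, 1 ≤ j k)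
    (hiV : tupleEquiv V i) (hjV : tupleEquiv V j)
    (hint : (Finset.univ.image i ∩ Finset.univ.image j).card ≤ 1) :
    (∫ ω, betaProd n V eps (presc t fun a b => μr a b ω) i *
        betaProd n V eps (presc t fun a b => μr a b ω) j ∂(ℙ : Measure Ω)
      = q ^ (2 * crossNum V) * t ^ (2 * nestNum V)) ∧
    (∫ ω, betaProd n V eps (presc t fun a b => μr a b ω) i *
        betaProd n V eps (presc t fun a b => μr a b ω) j ∂(ℙ : Measure Ω)
      = (∫ ω, betaProd n V eps (presc t fun a b => μr a b ω) i ∂(ℙ : Measure Ω)) *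
        ∫ ω, betaProd n V eps (presc t fun a b => μr a b ω) j ∂(ℙ : Measure Ω)) := by
  have ht : t ≠ 0 := ((abs_nonneg q).trans_lt hqt).ne'
  rw [integral_betaProd_presc_mul_betaProd_presc ht μr hmeas hindep hnz hmean hsq heps hiV hjV
      hi1 hj1 hint, integral_betaProd_presc ht μr hmeas hindep hnz hmean hsq heps hiV hi1,
    integral_betaProd_presc ht μr hmeas hindep hnz hmean hsq heps hjV hj1]
  constructor <;> ring

/-- if two tuples, each equivalent to `V` (whose blocks carry the
exponent pattern (1, ∗)), have value sets intersecting in at most one element, then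
`E[β(i)·β(j)] = q^{2 cross(V)} t^{2 nest(V)} = E[β(i)]·E[β(j)]`. -/
theorem expectation_factorizes_disjoint_tuples
    (q t : ℝ) (hqt : |q| < t)
{Ω : Type*} [MeasureSpace Ω] [IsProbabilityMeasure (ℙ : Measure Ω)]
    (μr : ℕ → ℕ → Ω → ℝ)
    (hmeas : ∀ p : PairIdx, Measurable fun ω => μr p.1.1 p.1.2 ω)
    (hindep : iIndepFun
      (fun p : PairIdx => fun ω => μr p.1.1 p.1.2 ω) ℙ)
    (hident : ∀ p p' : PairIdx,
      IdentDistrib (fun ω => μr p.1.1 p.1.2 ω) (fun ω => μr p'.1.1 p'.1.2 ω) ℙ ℙ)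
    (hnz : ∀ p : PairIdx, ∀ᵐ ω ∂ℙ, μr p.1.1 p.1.2 ω ≠ 0)
    (hL2 : ∀ p : PairIdx, MemLp (fun ω => μr p.1.1 p.1.2 ω) 2 ℙ)
    (hmean : ∀ p : PairIdx, ∫ ω, μr p.1.1 p.1.2 ω ∂ℙ = q / t)
    (hsq : ∀ p : PairIdx, ∫ ω, (μr p.1.1 p.1.2 ω) ^ 2 ∂ℙ = 1)
    (n : ℕ) (V : PairPartition n) (eps : Fin (2 * n) → Bool)
    (heps : ∀ m : Fin n, eps (V.w m) = false ∧ eps (V.z m) = true)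
    (i j : Fin (2 * n) → ℕ) (hi1 : ∀ k, 1 ≤ i k) (hj1 : ∀ k, 1 ≤ j k)
    (hiV : tupleEquiv V i) (hjV : tupleEquiv V j)
    (hint : (Finset.univ.image i ∩ Finset.univ.image j).card ≤ 1) :
    (∫ ω, betaProd n V eps (presc t fun a b => μr a b ω) i *
        betaProd n V eps (presc t fun a b => μr a b ω) j ∂(ℙ : Measure Ω)
      = q ^ (2 * crossNum V) * t ^ (2 * nestNum V)) ∧
    (∫ ω, betaProd n V eps (presc t fun a b => μr a b ω) i *
        betaProd n V eps (presc t fun a b => μr a b ω) j ∂(ℙ : Measure Ω)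
      = (∫ ω, betaProd n V eps (presc t fun a b => μr a b ω) i ∂(ℙ : Measure Ω)) *
        ∫ ω, betaProd n V eps (presc t fun a b => μr a b ω) j ∂(ℙ : Measure Ω)) :=
  expectation_factorizes_disjoint_tuples_general q t hqt μr hmeas hindep hnz hmean hsq n V eps heps
    i j hi1 hj1 hiV hjV hint
end
end

section
/- Fix t > 0 and nonzero reals {μ(i,j)}_{i<j}. With σ_x := [[1,0],[0,√t·x]], γ := [[0,1],[0,0]], and b_{n,i} := σ_{μ(1,i)} ⊗ … ⊗ σ_{μ(i−1,i)} ⊗ γ ⊗ σ₁^{⊗(n−i)} ∈ M₂(ℝ)^{⊗n}, one has for all 1 ≤ i < j ≤ n: b_{n,i} b_{n,j} = μ(i,j) · b_{n,j} b_{n,i}. -/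
open Filter MeasureTheory ProbabilityTheory
open scoped BigOperators ComplexOrder Classical

noncomputable section

/-!
The matrix `b_{n,i}` is the Kronecker product of its site factors, and Kronecker products
multiply site by site. At every site the factors of `b_{n,i}` and `b_{n,j}` commute up to a
scalar: two diagonal `σ`'s commute, `γ σ_x = √t x · σ_x γ` at site `i`, and
`σ₁ γ = (√t)⁻¹ · γ σ₁` at site `j`. The product of these scalars is `√t μ(i,j) · (√t)⁻¹ = μ(i,j)`.
-/

namespace Matrix

variable {ι α R : Type*} [Fintype ι] [CommSemiring R]

def piKronecker (A : ι → Matrix α α R) : Matrix (ι → α) (ι → α) R :=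
  of fun x y => ∏ k, A k (x k) (y k)

theorem piKronecker_mul [DecidableEq ι] [Fintype α] (A B : ι → Matrix α α R) :
    piKronecker A * piKronecker B = piKronecker (A * B) := by
  ext x y
  simp only [piKronecker, mul_apply, of_apply, Pi.mul_apply, ← Finset.prod_mul_distrib,
    Finset.prod_univ_sum, Fintype.piFinset_univ]

theorem piKronecker_smul (c : ι → R) (A : ι → Matrix α α R) :
    piKronecker (fun k => c k • A k) = (∏ k, c k) • piKronecker A := by
  ext x y
  simp [piKronecker, Finset.prod_mul_distrib]

theorem piKronecker_mul_eq_smul_mul [DecidableEq ι] [Fintype α] {A B : ι → Matrix α α R}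
    (c : ι → R) (h : ∀ k, A k * B k = c k • (B k * A k)) :
    piKronecker A * piKronecker B = (∏ k, c k) • (piKronecker B * piKronecker A) := by
  rw [piKronecker_mul, piKronecker_mul, ← piKronecker_smul]
  exact congrArg piKronecker (funext h)

end Matrix

open Matrix

theorem Fin.prod_ite_val_add_one_eq {M : Type*} [CommMonoid M] {n i : ℕ} (hi : 1 ≤ i)
    (hin : i ≤ n) (a : M) : ∏ k : Fin n, (if (k : ℕ) + 1 = i then a else 1) = a := by
  rw [Finset.prod_eq_single (⟨i - 1, by omega⟩ : Fin n)]
  · simp only [if_pos (by omega : i - 1 + 1 = i)]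
  · intro k _ hk
    rw [if_neg fun h => hk (Fin.ext (by simp; omega))]
  · simp

theorem sigmaM_mul_comm (t a b : ℝ) : sigmaM t a * sigmaM t b = sigmaM t b * sigmaM t a := by
  ext x y
  fin_cases x <;> fin_cases y <;> simp [sigmaM, mul_apply, Fin.sum_univ_two, mul_comm]

theorem gammaM_mul_sigmaM (t x : ℝ) :
    gammaM * sigmaM t x = (Real.sqrt t * x) • (sigmaM t x * gammaM) := by
  ext a b
  fin_cases a <;> fin_cases b <;> simp [sigmaM, gammaM, mul_apply, Fin.sum_univ_two]

theorem sigmaM_one_mul_gammaM {t : ℝ} (ht : 0 < t) :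
    sigmaM t 1 * gammaM = (Real.sqrt t)⁻¹ • (gammaM * sigmaM t 1) := by
  have hs : Real.sqrt t ≠ 0 := by positivity
  ext a b
  fin_cases a <;> fin_cases b <;> simp [sigmaM, gammaM, mul_apply, Fin.sum_univ_two, hs]

/-- The factor of `b_{n,i}` at site `l` (counted from `1`). -/
def jwFactor (t : ℝ) (m : ℕ → ℕ → ℝ) (i l : ℕ) : Matrix (Fin 2) (Fin 2) ℝ :=
  if l < i then sigmaM t (m l i) else if l = i then gammaM else sigmaM t 1

theorem jw_eq_piKronecker (t : ℝ) (m : ℕ → ℕ → ℝ) (n i : ℕ) :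
    jw t m n i = piKronecker fun k : Fin n => jwFactor t m i ((k : ℕ) + 1) :=
  rfl

theorem jwFactor_mul_jwFactor {t : ℝ} (ht : 0 < t) (m : ℕ → ℕ → ℝ) {i j : ℕ} (hij : i < j)
    (l : ℕ) :
    jwFactor t m i l * jwFactor t m j l =
      ((if l = i then Real.sqrt t * m i j else 1) * (if l = j then (Real.sqrt t)⁻¹ else 1)) •
        (jwFactor t m j l * jwFactor t m i l) := by
  unfold jwFactor
  rcases lt_trichotomy l i with hli | rfl | hil
  · simp [hli, hli.ne, hli.trans hij, (hli.trans hij).ne, sigmaM_mul_comm]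
  · simp [hij, hij.ne, gammaM_mul_sigmaM]
  · rcases lt_trichotomy l j with hlj | rfl | hjl
    · simp [hil.not_gt, hil.ne', hlj, hlj.ne, sigmaM_mul_comm]
    · simp [hij.not_gt, hij.ne', sigmaM_one_mul_gammaM ht]
    · simp [hil.not_gt, hil.ne', hjl.not_gt, hjl.ne']

theorem jordan_wigner_comm_general (t : ℝ) (ht : 0 < t) (m : ℕ → ℕ → ℝ)
    (n i j : ℕ) (hi : 1 ≤ i) (hij : i < j) (hj : j ≤ n) :
    jw t m n i * jw t m n j = m i j • (jw t m n j * jw t m n i) := by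
  have hs : Real.sqrt t ≠ 0 := by positivity
  have hcoeff : ∏ k : Fin n, (if (k : ℕ) + 1 = i then Real.sqrt t * m i j else 1) *
      (if (k : ℕ) + 1 = j then (Real.sqrt t)⁻¹ else 1) = m i j := by
    rw [Finset.prod_mul_distrib, Fin.prod_ite_val_add_one_eq hi (by omega),
      Fin.prod_ite_val_add_one_eq (by omega) hj]
    field_simp
  simp only [jw_eq_piKronecker]
  rw [piKronecker_mul_eq_smul_mul _ fun k => jwFactor_mul_jwFactor ht m hij _, hcoeff]

/-- for `1 ≤ i < j ≤ n`, the Jordan–Wigner matrices satisfy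
`b_{n,i} b_{n,j} = μ(i,j) · b_{n,j} b_{n,i}`. -/
theorem jordan_wigner_comm (t : ℝ) (ht : 0 < t) (m : ℕ → ℕ → ℝ)
    (hm : ∀ i j : ℕ, i < j → m i j ≠ 0)
    (n i j : ℕ) (hi : 1 ≤ i) (hij : i < j) (hj : j ≤ n) :
    jw t m n i * jw t m n j = m i j • (jw t m n j * jw t m n i) :=
  jordan_wigner_comm_general t ht m n i j hi hij hj
end
end

section
/- Fix t > 0 and nonzero reals {μ(i,j)}_{i<j}. With σ_x := [[1,0],[0,√t·x]], γ := [[0,1],[0,0]], * the transpose, b_{n,i} := σ_{μ(1,i)} ⊗ … ⊗ σ_{μ(i−1,i)} ⊗ γ ⊗ σ₁^{⊗(n−i)} ∈ M₂(ℝ)^{⊗n} ≅ M_{2ⁿ}(ℝ), and φ_n(a) := ⟨a e₀, e₀⟩ with e₀ the first standard basis vector of ℝ^{2ⁿ}, the functional φ_n factors over naturally ordered products in the sequence b_{n,1}, …, b_{n,n}: whenever i(1),…,i(m) ∈ {1,…,n} are such that equal indices occur in consecutive positions and the distinct index values appear in increasing order, with consecutive blocks of equal indices of lengths k₁, k₂−k₁,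 …, then φ_n(b_{n,i(1)}^{ε(1)} ⋯ b_{n,i(m)}^{ε(m)}) = φ_n(b_{n,i(1)}^{ε(1)} ⋯ b_{n,i(k₁)}^{ε(k₁)}) ⋯ φ_n(b_{n,i(k_{ℓ−1}+1)}^{ε(k_{ℓ−1}+1)} ⋯ b_{n,i(k_ℓ)}^{ε(k_ℓ)}) for all ε(1),…,ε(m) ∈ {1,*}. -/
open Filter MeasureTheory ProbabilityTheory
open scoped BigOperators ComplexOrder Classical

noncomputable section

/-!
Each `b_{n,i}` is an elementary tensor whose factors are all diagonal except `γ` in slot `i`, so a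
product of blocks is again an elementary tensor, and `φ_n` of an elementary tensor is the product over
the slots of the `(0,0)` entries. The `(0,0)` entry of a product `A * B` of `2 × 2` matrices is
`A₀₀ B₀₀` as soon as `A` or `B` is diagonal. In a naturally ordered product the block indices are
distinct, so in each slot at most one block contributes a non-diagonal factor, and every slot
factors over the blocks.
-/

namespace Matrix

variable {n R : Type*} [Fintype n] [DecidableEq n]

theorem IsDiag.mul [NonUnitalNonAssocSemiring R] {A B : Matrix n n R} (hA : A.IsDiag)
    (hB : B.IsDiag) : (A * B).IsDiag := by
  rw [← hA.diagonal_diag, ← hB.diagonal_diag, diagonal_mul_diagonal]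
  exact isDiag_diagonal _

theorem isDiag_list_prod [Semiring R] {l : List (Matrix n n R)} (h : ∀ A ∈ l, A.IsDiag) :
    l.prod.IsDiag := by
  induction l with
  | nil => exact isDiag_one
  | cons A l ih =>
    rw [List.forall_mem_cons] at h
    exact h.1.mul (ih h.2)

theorem mul_apply_self_of_isDiag_or [NonUnitalNonAssocSemiring R] {A B : Matrix n n R}
    (h : A.IsDiag ∨ B.IsDiag) (a : n) : (A * B) a a = A a a * B a a := by
  rcases h with hA | hB
  · conv_lhs => rw [← hA.diagonal_diag, diagonal_mul]
    rfl
  · conv_lhs => rw [← hB.diagonal_diag, mul_diagonal]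
    rfl

end Matrix

open Matrix

section KroneckerPi

variable {ι κ R : Type*} [Fintype ι] [DecidableEq ι] [Fintype κ] [DecidableEq κ] [CommSemiring R]

def kroneckerPi : (ι → Matrix κ κ R) →* Matrix (ι → κ) (ι → κ) R where
  toFun f := of fun x y => ∏ k, f k (x k) (y k)
  map_one' := by
    ext x y
    by_cases hxy : x = y
    · subst hxy
      simp [one_apply]
    · obtain ⟨k, hk⟩ := Function.ne_iff.mp hxy
      simp only [of_apply, Pi.one_apply, one_apply, if_neg hxy]
      exact Finset.prod_eq_zero (Finset.mem_univ k) (if_neg hk)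
  map_mul' f g := by
    ext x y
    simp only [of_apply, Pi.mul_apply, mul_apply, Finset.prod_univ_sum, Fintype.piFinset_univ,
      Finset.prod_mul_distrib]

theorem kroneckerPi_apply (f : ι → Matrix κ κ R) (x y : ι → κ) :
    kroneckerPi f x y = ∏ k, f k (x k) (y k) := rfl

theorem star_kroneckerPi [StarRing R] (f : ι → Matrix κ κ R) :
    star (kroneckerPi f) = kroneckerPi (star f) := by
  ext x y
  simp [kroneckerPi_apply, star_apply, star_prod]

theorem list_prod_map_sel_kroneckerPi [StarRing R] (f : ι → Matrix κ κ R) (es : List Bool) :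
    (es.map (sel (kroneckerPi f))).prod = kroneckerPi (es.map (sel f)).prod := by
  rw [map_list_prod, List.map_map]
  congr 2
  ext e : 1
  cases e
  · rfl
  · exact star_kroneckerPi f

theorem list_prod_kroneckerPi_apply_self {α : Type*} (g : α → ι → Matrix κ κ R) {L : List α}
    (hL : L.Pairwise fun a b => ∀ k, (g a k).IsDiag ∨ (g b k).IsDiag) (x : ι → κ) :
    (L.map fun a => kroneckerPi (g a)).prod x x
      = (L.map fun a => kroneckerPi (g a) x x).prod := by
  induction L with
  | nil => simp
  | cons a L ih =>
    rw [List.pairwise_cons] at hL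
    have hslot : ∀ k, (g a k).IsDiag ∨ ((L.map g).prod k).IsDiag := fun k =>
      or_iff_not_imp_left.mpr fun ha => by
        rw [Pi.list_prod_apply, List.map_map]
        exact isDiag_list_prod <| by
          simpa using fun b hb => (hL.1 b hb k).resolve_left ha
    have hprod : (L.map fun b => kroneckerPi (g b)).prod = kroneckerPi (L.map g).prod := by
      rw [map_list_prod, List.map_map]
      rfl
    rw [List.map_cons, List.prod_cons, List.map_cons, List.prod_cons, ← ih hL.2, hprod,
      ← map_mul, kroneckerPi_apply, kroneckerPi_apply, kroneckerPi_apply,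
      ← Finset.prod_mul_distrib]
    exact Finset.prod_congr rfl fun k _ => mul_apply_self_of_isDiag_or (hslot k) (x k)

end KroneckerPi

theorem isDiag_sigmaM (t x : ℝ) : (sigmaM t x).IsDiag := by
  intro i j hij
  fin_cases i <;> fin_cases j <;> simp_all [sigmaM]

def jwFactors (t : ℝ) (m : ℕ → ℕ → ℝ) (n i : ℕ) (k : Fin n) : Matrix (Fin 2) (Fin 2) ℝ :=
  if (k : ℕ) + 1 < i then sigmaM t (m ((k : ℕ) + 1) i)
  else if (k : ℕ) + 1 = i then gammaM
  else sigmaM t 1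

theorem jw_eq_kroneckerPi (t : ℝ) (m : ℕ → ℕ → ℝ) (n i : ℕ) :
    jw t m n i = kroneckerPi (jwFactors t m n i) := rfl

theorem isDiag_jwFactors {t : ℝ} {m : ℕ → ℕ → ℝ} {n i : ℕ} {k : Fin n} (hk : i ≠ (k : ℕ) + 1) :
    (jwFactors t m n i k).IsDiag := by
  unfold jwFactors
  split_ifs with h₁ h₂
  · exact isDiag_sigmaM _ _
  · exact absurd h₂.symm hk
  · exact isDiag_sigmaM _ _

theorem isDiag_list_prod_map_sel_jwFactors_apply {t : ℝ} {m : ℕ → ℕ → ℝ} {n i : ℕ} {k : Fin n}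
    (hk : i ≠ (k : ℕ) + 1) (es : List Bool) :
    ((es.map (sel (jwFactors t m n i))).prod k).IsDiag := by
  rw [Pi.list_prod_apply, List.map_map]
  refine isDiag_list_prod fun A hA => ?_
  obtain ⟨e, -, rfl⟩ := List.mem_map.mp hA
  cases e
  · exact isDiag_jwFactors hk
  · exact (isDiag_jwFactors hk).conjTranspose

theorem jordan_wigner_factors_general (t : ℝ) (m : ℕ → ℕ → ℝ)
    (n : ℕ) :
    ∀ L : List (ℕ × List Bool),
      List.Chain' (· < ·) (L.map Prod.fst) →
      (∀ p ∈ L, (1 ≤ p.1 ∧ p.1 ≤ n) ∧ p.2 ≠ []) →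
      phiM n ((L.map fun p => (p.2.map (sel (jw t m n p.1))).prod).prod)
        = (L.map fun p => phiM n ((p.2.map (sel (jw t m n p.1))).prod)).prod := by
  intro L hchain _
  have hdistinct : L.Pairwise fun p q => p.1 < q.1 :=
    List.pairwise_map.mp (List.isChain_iff_pairwise.mp hchain)
  simp only [phiM, jw_eq_kroneckerPi, list_prod_map_sel_kroneckerPi]
  refine list_prod_kroneckerPi_apply_self
    (fun p => (p.2.map (sel (jwFactors t m n p.1))).prod) (hdistinct.imp fun {p q} hpq k => ?_) _
  by_cases hp : p.1 = (k : ℕ) + 1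
  · exact .inr (isDiag_list_prod_map_sel_jwFactors_apply (by omega) _)
  · exact .inl (isDiag_list_prod_map_sel_jwFactors_apply hp _)

/-- `φ_n` factors over naturally ordered products of the Jordan–Wigner
matrices.  A naturally ordered product is presented as a concatenation of nonempty
blocks of constant index (each block a list of exponents), the block indices being
strictly increasing; `φ_n` of the product equals the product of `φ_n` over the blocks. -/
theorem jordan_wigner_factors (t : ℝ) (ht : 0 < t) (m : ℕ → ℕ → ℝ)
    (hm : ∀ i j : ℕ, i < j → m i j ≠ 0) (n : ℕ) :
    ∀ L : List (ℕ × List Bool),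
      List.Chain' (· < ·) (L.map Prod.fst) →
      (∀ p ∈ L, (1 ≤ p.1 ∧ p.1 ≤ n) ∧ p.2 ≠ []) →
      phiM n ((L.map fun p => (p.2.map (sel (jw t m n p.1))).prod).prod)
        = (L.map fun p => phiM n ((p.2.map (sel (jw t m n p.1))).prod)).prod :=
  jordan_wigner_factors_general t m n
end
end
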